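/- Let c0 > 0, F ∈ ℝ, θ ∈ ℝ, and fix x' ∈ ℝ, z' > 0. Set k_θ = (sin θ, cos θ) and τ_y^θ(u) = c0^{-1}(y·k_θ + |y − (u,0)|) for y = (y1, y2) with y2 > 0. Define, on {(x,z) ∈ ℝ² : z > 0}, the functions w_±^θ(x,z) = τ_{(x,z)}^θ(x ± F z) − τ_{(x',z')}^θ(x ± F z). Then w_±^θ(x', z') = 0 and the gradient at (x', z') is ∇w_±^θ(x', z') = (c0^{-1}/√(1+F²)) · (√(1+F²) sin θ ∓ F , 1 + √(1+F²) cos θ). -/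

import Mathlib

/-!
On the aperture endpoint `u = x ± F z` the distance from `(x, z)` to the receptor `(u, 0)` is
exactly `z √(1 + F²)`, so the first travel time is linear near `(x', z')`. The second travel time
is the distance from the fixed point `(x', z')` to the moving receptor, whose gradient at
`(x', z')` is `±F/√(1+F²)` times that of `u = x ± F z`. Since `F² = (1 + F²) - 1`, the
difference of the two gradients collapses to the stated formula.
-/

open Real ContinuousLinearMap

/-- The paper's `τ_y^θ(u)`. -/
noncomputable def travelTime (c0 θ : ℝ) (y : ℝ × ℝ) (u : ℝ) : ℝ :=
  c0⁻¹ * ((y.1 * sin θ + y.2 * cos θ) + √((y.1 - u) ^ 2 + y.2 ^ 2))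

lemma sqrt_sub_aperture_sq_add_sq {ε : ℝ} (hε : ε ^ 2 = 1) (F x : ℝ) {z : ℝ} (hz : 0 ≤ z) :
    √((x - (x + ε * F * z)) ^ 2 + z ^ 2) = z * √(1 + F ^ 2) := by
  have hsq : (x - (x + ε * F * z)) ^ 2 + z ^ 2 = z ^ 2 * (1 + F ^ 2) := by
    linear_combination F ^ 2 * z ^ 2 * hε
  rw [hsq, sqrt_mul (sq_nonneg z), sqrt_sq hz]

lemma travelTime_aperture {ε : ℝ} (hε : ε ^ 2 = 1) (c0 F θ : ℝ) {y : ℝ × ℝ} (hy : 0 ≤ y.2) :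
    travelTime c0 θ y (y.1 + ε * F * y.2) =
      c0⁻¹ * (y.1 * sin θ + y.2 * (cos θ + √(1 + F ^ 2))) := by
  rw [travelTime, sqrt_sub_aperture_sq_add_sq hε F y.1 hy]
  ring

lemma hasFDerivAt_travelTime_aperture {ε : ℝ} (hε : ε ^ 2 = 1) (c0 F θ : ℝ) {p : ℝ × ℝ}
    (hp : 0 < p.2) :
    HasFDerivAt (fun q : ℝ × ℝ => travelTime c0 θ q (q.1 + ε * F * q.2))
      (c0⁻¹ • (sin θ • fst ℝ ℝ ℝ + (cos θ + √(1 + F ^ 2)) • snd ℝ ℝ ℝ)) p := by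
  have hlin : HasFDerivAt (fun q : ℝ × ℝ => c0⁻¹ * (q.1 * sin θ + q.2 * (cos θ + √(1 + F ^ 2))))
      (c0⁻¹ • (sin θ • fst ℝ ℝ ℝ + (cos θ + √(1 + F ^ 2)) • snd ℝ ℝ ℝ)) p :=
    ((hasFDerivAt_fst.mul_const _).add (hasFDerivAt_snd.mul_const _)).const_mul _
  refine hlin.congr_of_eventuallyEq ?_
  filter_upwards [continuous_snd.continuousAt.eventually (lt_mem_nhds hp)] with q hq
  exact travelTime_aperture hε c0 F θ hq.le

lemma hasFDerivAt_travelTime_comp {E : Type*} [NormedAddCommGroup E] [NormedSpace ℝ E]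
    (c0 θ : ℝ) {y : ℝ × ℝ} (hy : y.2 ≠ 0) {u : E → ℝ} {u' : E →L[ℝ] ℝ} {p : E}
    (hu : HasFDerivAt u u' p) :
    HasFDerivAt (fun q => travelTime c0 θ y (u q))
      ((-(c0⁻¹ * ((y.1 - u p) / √((y.1 - u p) ^ 2 + y.2 ^ 2)))) • u') p := by
  have hpos : (y.1 - u p) ^ 2 + y.2 ^ 2 ≠ 0 := by positivity
  have hdist : HasFDerivAt (fun q => √((y.1 - u q) ^ 2 + y.2 ^ 2))
      ((1 / (2 * √((y.1 - u p) ^ 2 + y.2 ^ 2))) • ((2 • (y.1 - u p) ^ (2 - 1)) • (-u'))) p :=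
    (((hu.const_sub y.1).pow 2).add_const (y.2 ^ 2)).sqrt hpos
  refine ((hdist.const_add (y.1 * sin θ + y.2 * cos θ)).const_mul c0⁻¹).congr_fderiv ?_
  refine ContinuousLinearMap.ext fun v => ?_
  simp only [smul_apply, neg_apply, smul_eq_mul, nsmul_eq_mul]
  field_simp
  ring

theorem travel_time_difference_gradient_general
    (c0 F θ x' z' : ℝ) (hz' : 0 < z')
    (ε : ℝ) (hε : ε = 1 ∨ ε = -1)
    (w : ℝ × ℝ → ℝ)
    (hw : ∀ p : ℝ × ℝ, w p =
      c0⁻¹ * ((p.1 * Real.sin θ + p.2 * Real.cos θ)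
          + Real.sqrt ((p.1 - (p.1 + ε * F * p.2)) ^ 2 + p.2 ^ 2))
      - c0⁻¹ * ((x' * Real.sin θ + z' * Real.cos θ)
          + Real.sqrt ((x' - (p.1 + ε * F * p.2)) ^ 2 + z' ^ 2))) :
    w (x', z') = 0 ∧
    HasFDerivAt w
      ((c0⁻¹ / Real.sqrt (1 + F ^ 2)) •
        ((Real.sqrt (1 + F ^ 2) * Real.sin θ - ε * F) • (ContinuousLinearMap.fst ℝ ℝ ℝ)
          + (1 + Real.sqrt (1 + F ^ 2) * Real.cos θ) • (ContinuousLinearMap.snd ℝ ℝ ℝ)))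
      (x', z') := by
  have hε2 : ε ^ 2 = 1 := by rcases hε with rfl | rfl <;> norm_num
  have hw' : w = fun p => travelTime c0 θ p (p.1 + ε * F * p.2)
      - travelTime c0 θ (x', z') (p.1 + ε * F * p.2) := funext hw
  refine ⟨by simp only [hw', sub_self], ?_⟩
  have hreceptor : HasFDerivAt (fun p : ℝ × ℝ => p.1 + ε * F * p.2)
      (fst ℝ ℝ ℝ + (ε * F) • snd ℝ ℝ ℝ) (x', z') :=
    hasFDerivAt_fst.add (hasFDerivAt_snd.const_mul _)
  have hS2 : √(1 + F ^ 2) ^ 2 = 1 + F ^ 2 := sq_sqrt (by positivity)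
  rw [hw']
  refine ((hasFDerivAt_travelTime_aperture hε2 c0 F θ (p := (x', z')) hz').sub
    (hasFDerivAt_travelTime_comp c0 θ (y := (x', z')) hz'.ne' hreceptor)).congr_fderiv ?_
  refine ContinuousLinearMap.ext fun v => ?_
  simp only [sqrt_sub_aperture_sq_add_sq hε2 F x' hz'.le, smul_apply, add_apply, sub_apply,
    coe_fst', coe_snd', smul_eq_mul]
  field_simp
  linear_combination z' * v.2 / c0 * (hS2 - F ^ 2 * hε2)

/-- With `τ_{(y1,y2)}^θ(u) = c0⁻¹(y·k_θ + |y − (u,0)|)`, `k_θ = (sin θ, cos θ)`,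
and the `±` sign encoded by `ε ∈ {1, −1}`, define on `ℝ²`
`w_±^θ(x,z) = τ_{(x,z)}^θ(x ± Fz) − τ_{(x',z')}^θ(x ± Fz)`.
Then `w_±^θ(x',z') = 0` and
`∇w_±^θ(x',z') = (c0⁻¹/√(1+F²)) (√(1+F²) sin θ ∓ F, 1 + √(1+F²) cos θ)`. -/
theorem travel_time_difference_gradient
    (c0 F θ x' z' : ℝ) (hc0 : 0 < c0) (hz' : 0 < z')
    (ε : ℝ) (hε : ε = 1 ∨ ε = -1)
    (w : ℝ × ℝ → ℝ)
    (hw : ∀ p : ℝ × ℝ, w p =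
      c0⁻¹ * ((p.1 * Real.sin θ + p.2 * Real.cos θ)
          + Real.sqrt ((p.1 - (p.1 + ε * F * p.2)) ^ 2 + p.2 ^ 2))
      - c0⁻¹ * ((x' * Real.sin θ + z' * Real.cos θ)
          + Real.sqrt ((x' - (p.1 + ε * F * p.2)) ^ 2 + z' ^ 2))) :
    w (x', z') = 0 ∧
    HasFDerivAt w
      ((c0⁻¹ / Real.sqrt (1 + F ^ 2)) •
        ((Real.sqrt (1 + F ^ 2) * Real.sin θ - ε * F) • (ContinuousLinearMap.fst ℝ ℝ ℝ)
          + (1 + Real.sqrt (1 + F ^ 2) * Real.cos θ) • (ContinuousLinearMap.snd ℝ ℝ ℝ)))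
      (x', z') :=
  travel_time_difference_gradient_general c0 F θ x' z' hz' ε hε w hw
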